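/- Let P be a potential graph with barrier digraph V, let q ∈ S ⊆ N, and suppose T_S ≠ ∅. Then λ^{•q}_S = ν_S − Σ_{t ∈ S} p_{tt} + p_{qq}. Moreover, if y ∈ S satisfies p_{yy} = min_{t ∈ S} p_{tt} and T ∈ T̃_S is a minimum-weight undirected tree on S, then λ^•_S = λ^{•y}_S = Υ^{T_y}, where T_y is the entering tree corresponding to T with root y. -/

import Mathlib

/-!
Directing an undirected tree on `S` toward `q` is a bijection onto the entering trees on `S`
with root `q`, and every vertex of `S` other than `q` is the tail of exactly one arc. Hence
`Υ^{T_q} = Σ_{(i,j)} p_ij - Σ_{t ∈ S \ q} p_tt` is the weight of the undirected tree minus the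
constant `Σ_{t ∈ S} p_tt - p_qq`, and minimising over one family is minimising over the other.
The constant is smallest for a root `y` of minimal loop weight, which gives the second part.
-/

open scoped Classical

namespace BarrierForests

variable {α : Type*} [Fintype α] [DecidableEq α]

/-- Total weight of a set of arcs. -/
def aweight (v : α → α → ℝ) (A : Finset (α × α)) : ℝ := ∑ a ∈ A, v a.1 a.2

/-- Weight `Υ^A_S` of the arcs of `A` whose tail lies in `S`. -/
def aweightOn (v : α → α → ℝ) (A : Finset (α × α)) (S : Finset α) : ℝ :=
  ∑ a ∈ A.filter (fun a => a.1 ∈ S), v a.1 a.2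

/-- The relation "there is an arc from `i` to `j` in `A`". -/
def arcRel (A : Finset (α × α)) : α → α → Prop := fun i j => (i, j) ∈ A

/-- Entering forest: every vertex has out-degree at most one, and there are no
directed cycles. -/
def IsEForest (A : Finset (α × α)) : Prop :=
  (∀ i j j', (i, j) ∈ A → (i, j') ∈ A → j = j') ∧
  ∀ i, ¬ Relation.TransGen (arcRel A) i i

/-- Roots of a (spanning) entering forest: the vertices with no outgoing arc. -/
noncomputable def rootSet (A : Finset (α × α)) : Finset α :=
  Finset.univ.filter fun i => ∀ j, (i, j) ∉ A

/-- `𝓕^k`: spanning entering forests of the digraph with arc set `E`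
having exactly `k` trees (equivalently, `k` roots). -/
def FSet (E : Finset (α × α)) (k : ℕ) : Set (Finset (α × α)) :=
  {A | A ⊆ E ∧ IsEForest A ∧ (rootSet A).card = k}

/-- The infimum (in `EReal`, so `⊤` for the empty family) of the `w`-weights of the
members of `s`. -/
noncomputable def minW {β : Type*} (s : Set β) (w : β → ℝ) : EReal :=
  sInf ((fun x => (w x : EReal)) '' s)

/-- `φ^k`: minimum weight of a spanning entering forest with `k` trees. -/
noncomputable def phi (v : α → α → ℝ) (E : Finset (α × α)) (k : ℕ) : EReal :=
  minW (FSet E k) (aweight v)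

/-- `F ∈ 𝓕̃^k`: minimal spanning entering forest with `k` trees. -/
def IsMinForest (v : α → α → ℝ) (E : Finset (α × α)) (k : ℕ) (F : Finset (α × α)) : Prop :=
  F ∈ FSet E k ∧ (aweight v F : EReal) = phi v E k

/-- Vertex set of the tree `T^F_i` of the entering forest `F` rooted at `i`:
all vertices from which `i` is reachable. -/
noncomputable def treeVerts (F : Finset (α × α)) (i : α) : Finset α :=
  Finset.univ.filter fun j => Relation.ReflTransGen (arcRel F) j i

/-- Arc set of the tree `T^F_i`. -/
noncomputable def treeArcs (F : Finset (α × α)) (i : α) : Finset (α × α) :=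
  F.filter fun a => a.1 ∈ treeVerts F i

/-- Induced subgraph (restriction) of the arc set `A` on the vertex set `S`. -/
def restrictArcs (A : Finset (α × α)) (S : Finset α) : Finset (α × α) :=
  A.filter fun a => a.1 ∈ S ∧ a.2 ∈ S

/-- `T ∈ 𝓣^{•q}_S`: `T` is an entering tree that is a subgraph of the digraph with
arc set `E`, with vertex set `S` and root `q`. -/
def IsTreeOn (E T : Finset (α × α)) (S : Finset α) (q : α) : Prop :=
  q ∈ S ∧ T ⊆ E ∧ (∀ a ∈ T, a.1 ∈ S ∧ a.2 ∈ S) ∧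
  (∀ i ∈ S, i ≠ q → ∃! j, (i, j) ∈ T) ∧
  (∀ j, (q, j) ∉ T) ∧
  ∀ i ∈ S, Relation.ReflTransGen (arcRel T) i q

/-- `λ^{•q}_S`. -/
noncomputable def lamB (v : α → α → ℝ) (E : Finset (α × α)) (S : Finset α) (q : α) : EReal :=
  minW {T | IsTreeOn E T S q} (aweight v)

/-- `λ^•_S = min_{q ∈ S} λ^{•q}_S`. -/
noncomputable def lamBul (v : α → α → ℝ) (E : Finset (α × α)) (S : Finset α) : EReal :=
  minW {T | ∃ q ∈ S, IsTreeOn E T S q} (aweight v)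

/-- `T ∈ 𝓣^{∘q}_S`: `T` has `|S| + 1` vertices, `T|_S` is an entering tree with vertex
set `S` and root `q`, and the single arc of `T` leaving `S` goes from `q` to the root
`r ∉ S` of `T`. -/
def IsCTreeOn (E T : Finset (α × α)) (S : Finset α) (q : α) : Prop :=
  ∃ r, r ∉ S ∧ ∃ T', IsTreeOn E T' S q ∧ (q, r) ∈ E ∧ T = insert (q, r) T'

/-- `λ^{∘q}_S`. -/
noncomputable def lamC (v : α → α → ℝ) (E : Finset (α × α)) (S : Finset α) (q : α) : EReal :=
  minW {T | IsCTreeOn E T S q} (aweight v)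

/-- `λ^∘_S = min_{q ∈ S} λ^{∘q}_S`. -/
noncomputable def lamCirc (v : α → α → ℝ) (E : Finset (α × α)) (S : Finset α) : EReal :=
  minW {T | ∃ q ∈ S, IsCTreeOn E T S q} (aweight v)

/-- `μ^∘_S`: minimum of `Υ^F_S` over the spanning entering forests `F ∈ 𝓕^∘_S`,
i.e. those in which every vertex of `S` has an outgoing arc. -/
noncomputable def muCirc (v : α → α → ℝ) (E : Finset (α × α)) (S : Finset α) : EReal :=
  minW {A | A ⊆ E ∧ IsEForest A ∧ ∀ i ∈ S, ∃ j, (i, j) ∈ A} fun A => aweightOn v A S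

/-- `G ∈ 𝓡^F_y`: `G` is a descendant of `F` at the root `y`, i.e. `y` is a root of
`F`, the roots of `G` are those of `F` except `y`, `G` induces `T^F_q` on the vertex
set of every tree of `F` other than `T^F_y`, and `G` induces a tree on the vertex set
of `T^F_y`. -/
def IsDescendant (E F G : Finset (α × α)) (y : α) : Prop :=
  y ∈ rootSet F ∧ rootSet G = rootSet F \ {y} ∧
  (∀ q ∈ rootSet G, restrictArcs G (treeVerts F q) = treeArcs F q) ∧
  ∃ a ∈ treeVerts F y, IsTreeOn E (restrictArcs G (treeVerts F y)) (treeVerts F y) a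

/-- A potential graph: a connected weighted undirected graph with a loop at every
vertex.  Edges are recorded as a symmetric reflexive set of ordered pairs, with a
symmetric weight function `p`. -/
structure PotGraph (α : Type*) [Fintype α] [DecidableEq α] where
  p : α → α → ℝ
  edges : Finset (α × α)
  symm_mem : ∀ i j, (i, j) ∈ edges → (j, i) ∈ edges
  loop_mem : ∀ i, (i, i) ∈ edges
  symm_w : ∀ i j, p i j = p j i
  connected : ∀ i j : α, Relation.ReflTransGen (fun a b => (a, b) ∈ edges ∧ a ≠ b) i j

/-- Arc set of the barrier digraph of the potential graph `P`: an arc `(i,j)`, `i ≠ j`,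
for each non-loop edge of `P`. -/
def barcs (P : PotGraph α) : Finset (α × α) := P.edges.filter fun a => a.1 ≠ a.2

/-- Arc weights of the barrier digraph: `v i j = p i j - p i i`. -/
def bw (P : PotGraph α) : α → α → ℝ := fun i j => P.p i j - P.p i i

/-- Weight of a set of undirected edges of `P`. -/
noncomputable def uweight (P : PotGraph α) (T : Finset (Sym2 α)) : ℝ :=
  ∑ e ∈ T, Sym2.lift ⟨P.p, P.symm_w⟩ e

/-- `T ∈ 𝓣_S`: `T` is an undirected tree that is a subgraph of `P` (loops unused)
with vertex set `S`: its edges are non-loop edges of `P` joining vertices of `S`,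
it is connected on `S`, and it has `|S| - 1` edges. -/
def IsUTreeOn (P : PotGraph α) (T : Finset (Sym2 α)) (S : Finset α) : Prop :=
  (∀ e ∈ T, ∃ i j, i ≠ j ∧ e = s(i, j) ∧ (i, j) ∈ P.edges ∧ i ∈ S ∧ j ∈ S) ∧
  (∀ i ∈ S, ∀ j ∈ S, Relation.ReflTransGen (fun a b => s(a, b) ∈ T) i j) ∧
  T.card + 1 = S.card

/-- `ν_S`: minimum weight of an undirected tree on `S` that is a subgraph of `P`. -/
noncomputable def nu (P : PotGraph α) (S : Finset α) : EReal :=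
  minW {T | IsUTreeOn P T S} (uweight P)

/-- The underlying undirected edge set of a set of arcs. -/
def undir (A : Finset (α × α)) : Finset (Sym2 α) := A.image fun a => s(a.1, a.2)

/-- `Tq` is the entering tree (with root `q`, vertex set `S`, subgraph of the barrier
digraph of `P`) corresponding to the undirected tree `T`: it is obtained from `T` by
directing all edges toward `q` and replacing the weight of each arc `(i,j)` by
`v i j = p i j - p i i`. -/
def Corresponds (P : PotGraph α) (Tq : Finset (α × α)) (T : Finset (Sym2 α))
    (S : Finset α) (q : α) : Prop :=
  IsTreeOn (barcs P) Tq S q ∧ undir Tq = T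

end BarrierForests

theorem SimpleGraph.Reachable.exists_adj_dist_lt {V : Type*} {G : SimpleGraph V} {u v : V}
    (h : G.Reachable u v) (hne : u ≠ v) : ∃ w, G.Adj u w ∧ G.dist w v < G.dist u v := by
  obtain ⟨p, hp⟩ := h.exists_walk_length_eq_dist
  cases p with
  | nil => exact (hne rfl).elim
  | cons hadj p =>
    refine ⟨_, hadj, ?_⟩
    have := G.dist_le p
    rw [SimpleGraph.Walk.length_cons] at hp
    omega

namespace BarrierForests

variable {α : Type*}

section minW

variable {β γ : Type*} {s t : Set β} {w w' : β → ℝ}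

lemma minW_le (w : β → ℝ) {x : β} (hx : x ∈ s) : minW s w ≤ w x :=
  sInf_le ⟨x, hx, rfl⟩

lemma le_minW {c : EReal} (h : ∀ x ∈ s, c ≤ w x) : c ≤ minW s w :=
  le_sInf <| by rintro _ ⟨x, hx, rfl⟩; exact h x hx

lemma minW_eq_of_forall_le {x : β} (hx : x ∈ s) (h : ∀ y ∈ s, w x ≤ w y) :
    minW s w = w x :=
  le_antisymm (minW_le w hx) (le_minW fun y hy => EReal.coe_le_coe_iff.2 (h y hy))

lemma minW_anti (w : β → ℝ) (h : s ⊆ t) : minW t w ≤ minW s w :=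
  sInf_le_sInf (Set.image_mono h)

lemma minW_congr (h : ∀ x ∈ s, w x = w' x) : minW s w = minW s w' := by
  unfold minW
  rw [Set.image_congr fun x hx => congrArg _ (h x hx)]

lemma minW_image (f : β → γ) (w : γ → ℝ) :
    minW (f '' s) w = minW s (fun x => w (f x)) := by
  rw [minW, minW, Set.image_image]

lemma le_minW_add_const (w : β → ℝ) (c : ℝ) : minW s w + c ≤ minW s (fun x => w x + c) :=
  le_minW fun x hx => by rw [EReal.coe_add]; exact add_le_add_left (minW_le w hx) _

lemma minW_add_const (w : β → ℝ) (c : ℝ) : minW s (fun x => w x + c) = minW s w + c := by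
  refine le_antisymm ?_ (le_minW_add_const w c)
  calc minW s (fun x => w x + c) = minW s (fun x => w x + c) + (-c : ℝ) + c := by
        rw [EReal.coe_neg, ← sub_eq_add_neg, EReal.sub_add_cancel]
    _ ≤ minW s (fun x => w x + c + -c) + c := by gcongr; exact le_minW_add_const _ _
    _ = minW s w + c := by simp only [add_neg_cancel_right]

lemma minW_sub_const (w : β → ℝ) (c : ℝ) : minW s (fun x => w x - c) = minW s w - c := by
  simp only [sub_eq_add_neg, minW_add_const, EReal.coe_neg]

end minW

namespace IsTreeOn

variable {E T : Finset (α × α)} {S : Finset α} {q : α}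

lemma fst_ne_root (hT : IsTreeOn E T S q) {a : α × α} (ha : a ∈ T) : a.1 ≠ q := by
  rintro rfl
  exact hT.2.2.2.2.1 a.2 ha

lemma injOn_fst (hT : IsTreeOn E T S q) : Set.InjOn Prod.fst (T : Set (α × α)) := by
  rintro ⟨i, j⟩ ha ⟨i', j'⟩ hb (rfl : i = i')
  have hi : i ∈ S := (hT.2.2.1 _ ha).1
  rw [(hT.2.2.2.1 i hi (hT.fst_ne_root ha)).unique ha hb]

lemma image_fst [DecidableEq α] (hT : IsTreeOn E T S q) : T.image Prod.fst = S.erase q := by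
  ext i
  simp only [Finset.mem_image, Finset.mem_erase]
  constructor
  · rintro ⟨a, ha, rfl⟩
    exact ⟨hT.fst_ne_root ha, (hT.2.2.1 a ha).1⟩
  · rintro ⟨hiq, hi⟩
    obtain ⟨j, hj, -⟩ := hT.2.2.2.1 i hi hiq
    exact ⟨(i, j), hj, rfl⟩

lemma sum_fst [DecidableEq α] (hT : IsTreeOn E T S q) (f : α → ℝ) :
    ∑ a ∈ T, f a.1 = ∑ i ∈ S.erase q, f i := by
  rw [← hT.image_fst, Finset.sum_image hT.injOn_fst]

lemma card_add_one [DecidableEq α] (hT : IsTreeOn E T S q) : T.card + 1 = S.card := by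
  rw [← Finset.card_image_of_injOn hT.injOn_fst, hT.image_fst, Finset.card_erase_add_one hT.1]

lemma swap_notMem (hT : IsTreeOn E T S q) {i j : α} (hij : (i, j) ∈ T) : (j, i) ∉ T := by
  intro hji
  have hiq : i ≠ q := hT.fst_ne_root hij
  have hjq : j ≠ q := hT.fst_ne_root hji
  obtain ⟨-, -, hend, huniq, -, hreach⟩ := hT
  -- The successor map swaps `i` and `j`, so the path from `i` can never reach the root.
  have avoid : ∀ x, Relation.ReflTransGen (arcRel T) x q → x ≠ i ∧ x ≠ j := by
    intro x hx
    induction hx using Relation.ReflTransGen.head_induction_on with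
    | refl => exact ⟨hiq.symm, hjq.symm⟩
    | @head x y hxy _ ih =>
      constructor
      · rintro rfl
        exact ih.2 ((huniq x (hend _ hij).1 hiq).unique hxy hij)
      · rintro rfl
        exact ih.1 ((huniq x (hend _ hji).1 hjq).unique hxy hji)
  exact (avoid i (hreach i (hend _ hij).1)).1 rfl

lemma injOn_mk (hT : IsTreeOn E T S q) :
    Set.InjOn (fun a : α × α => s(a.1, a.2)) (T : Set (α × α)) := by
  rintro ⟨i, j⟩ ha ⟨i', j'⟩ hb hab
  rcases Sym2.eq_iff.1 hab with ⟨rfl, rfl⟩ | ⟨rfl, rfl⟩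
  · rfl
  · exact (hT.swap_notMem ha hb).elim

lemma card_undir_add_one [DecidableEq α] (hT : IsTreeOn E T S q) :
    (undir T).card + 1 = S.card := by
  rw [undir, Finset.card_image_of_injOn hT.injOn_mk, hT.card_add_one]

end IsTreeOn

lemma isTreeOn_image_next [DecidableEq α] {E : Finset (α × α)} {S : Finset α} {q : α}
    (f : α → α) (d : α → ℕ) (hq : q ∈ S)
    (hf : ∀ i ∈ S, i ≠ q → (i, f i) ∈ E ∧ f i ∈ S ∧ d (f i) < d i) :
    IsTreeOn E ((S.erase q).image fun i => (i, f i)) S q := by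
  have mem : ∀ {i j}, (i, j) ∈ (S.erase q).image (fun i => (i, f i)) ↔
      (i ≠ q ∧ i ∈ S) ∧ f i = j := by
    intro i j
    simp only [Finset.mem_image, Finset.mem_erase, Prod.mk.injEq]
    constructor
    · rintro ⟨i, hi, rfl, rfl⟩; exact ⟨hi, rfl⟩
    · rintro ⟨hi, rfl⟩; exact ⟨i, hi, rfl, rfl⟩
  refine ⟨hq, ?_, ?_, ?_, ?_, ?_⟩
  · rintro ⟨i, j⟩ hij
    obtain ⟨⟨hiq, hi⟩, rfl⟩ := mem.1 hij
    exact (hf i hi hiq).1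
  · rintro ⟨i, j⟩ hij
    obtain ⟨⟨hiq, hi⟩, rfl⟩ := mem.1 hij
    exact ⟨hi, (hf i hi hiq).2.1⟩
  · intro i hi hiq
    exact ⟨f i, mem.2 ⟨⟨hiq, hi⟩, rfl⟩, fun j hj => (mem.1 hj).2.symm⟩
  · intro j hj
    exact (mem.1 hj).1.1 rfl
  · intro i hi
    induction hn : d i using Nat.strong_induction_on generalizing i with
    | _ n ih =>
      by_cases hiq : i = q
      · rw [hiq]
      · obtain ⟨-, hfi, hlt⟩ := hf i hi hiq
        exact .head (mem.2 ⟨⟨hiq, hi⟩, rfl⟩) (ih _ (hn ▸ hlt) _ hfi rfl)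

variable [Fintype α] [DecidableEq α]

section PotGraph

variable {P : PotGraph α} {S : Finset α} {q : α}

lemma IsTreeOn.isUTreeOn_undir {T : Finset (α × α)} (hT : IsTreeOn (barcs P) T S q) :
    IsUTreeOn P (undir T) S := by
  refine ⟨?_, fun i hi j hj => ?_, hT.card_undir_add_one⟩
  · intro e he
    obtain ⟨⟨i, j⟩, ha, rfl⟩ := Finset.mem_image.1 he
    obtain ⟨hP, hij⟩ := Finset.mem_filter.1 (hT.2.1 ha)
    exact ⟨i, j, hij, rfl, hP, hT.2.2.1 _ ha⟩
  · have fwd : ∀ a b, arcRel T a b → s(a, b) ∈ undir T := fun a b h =>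
      Finset.mem_image.2 ⟨(a, b), h, rfl⟩
    have bwd : ∀ a b, arcRel T b a → s(a, b) ∈ undir T := fun a b h =>
      Sym2.eq_swap ▸ fwd b a h
    exact (Relation.ReflTransGen.mono fwd _ _ (hT.2.2.2.2.2 i hi)).trans
      (Relation.ReflTransGen.mono bwd _ _ (Relation.reflTransGen_swap.2 (hT.2.2.2.2.2 j hj)))

lemma IsTreeOn.aweight_bw_eq {E T : Finset (α × α)} (hT : IsTreeOn E T S q) :
    aweight (bw P) T = uweight P (undir T) - ∑ t ∈ S, P.p t t + P.p q q := by
  have huw : uweight P (undir T) = ∑ a ∈ T, P.p a.1 a.2 := by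
    rw [uweight, undir, Finset.sum_image hT.injOn_mk]
    rfl
  rw [huw, ← Finset.sum_erase_add _ _ hT.1, ← hT.sum_fst fun i => P.p i i, aweight]
  simp only [bw, Finset.sum_sub_distrib]
  ring

lemma IsUTreeOn.mem_barcs {U : Finset (Sym2 α)} (hU : IsUTreeOn P U S) {a b : α}
    (h : s(a, b) ∈ U) : (a, b) ∈ barcs P ∧ a ∈ S ∧ b ∈ S := by
  obtain ⟨i, j, hij, he, hP, hi, hj⟩ := hU.1 _ h
  rcases Sym2.eq_iff.1 he with ⟨rfl, rfl⟩ | ⟨rfl, rfl⟩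
  · exact ⟨Finset.mem_filter.2 ⟨hP, hij⟩, hi, hj⟩
  · exact ⟨Finset.mem_filter.2 ⟨P.symm_mem _ _ hP, hij.symm⟩, hj, hi⟩

lemma IsUTreeOn.exists_isTreeOn_undir_eq {U : Finset (Sym2 α)} (hU : IsUTreeOn P U S)
    (hq : q ∈ S) : ∃ T, IsTreeOn (barcs P) T S q ∧ undir T = U := by
  -- Orient every edge toward `q` by sending each vertex to a neighbour closer to `q`.
  let G := SimpleGraph.fromEdgeSet (U : Set (Sym2 α))
  have hadj : ∀ {a b}, G.Adj a b ↔ s(a, b) ∈ U := fun {a b} =>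
    (SimpleGraph.fromEdgeSet_adj _).trans
      ⟨And.left, fun h => ⟨h, (Finset.mem_filter.1 (hU.mem_barcs h).1).2⟩⟩
  have hreach : ∀ i ∈ S, G.Reachable i q := fun i hi =>
    (SimpleGraph.reachable_iff_reflTransGen _ _).2
      (Relation.ReflTransGen.mono (fun _ _ => hadj.2) _ _ (hU.2.1 i hi q hq))
  have hnext : ∀ i ∈ S, i ≠ q → ∃ j,
      s(i, j) ∈ U ∧ (i, j) ∈ barcs P ∧ j ∈ S ∧ G.dist j q < G.dist i q := by
    intro i hi hiq
    obtain ⟨j, hij, hlt⟩ := (hreach i hi).exists_adj_dist_lt hiq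
    have hij := hadj.1 hij
    exact ⟨j, hij, (hU.mem_barcs hij).1, (hU.mem_barcs hij).2.2, hlt⟩
  choose! f hfU hf using hnext
  have hT := isTreeOn_image_next f (G.dist · q) hq hf
  refine ⟨_, hT, Finset.eq_of_subset_of_card_le ?_ ?_⟩
  · intro e he
    obtain ⟨_, ha, rfl⟩ := Finset.mem_image.1 he
    obtain ⟨i, hi, rfl⟩ := Finset.mem_image.1 ha
    exact hfU i (Finset.mem_erase.1 hi).2 (Finset.mem_erase.1 hi).1
  · have := hT.card_undir_add_one
    have := hU.2.2
    omega

lemma image_undir_setOf_isTreeOn (hq : q ∈ S) :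
    undir '' {T | IsTreeOn (barcs P) T S q} = {U | IsUTreeOn P U S} := by
  ext U
  constructor
  · rintro ⟨T, hT, rfl⟩
    exact hT.isUTreeOn_undir
  · intro hU
    exact hU.exists_isTreeOn_undir_eq hq

lemma lamB_eq_nu_sub_add (hq : q ∈ S) :
    lamB (bw P) (barcs P) S q = nu P S - ((∑ t ∈ S, P.p t t : ℝ) : EReal) + P.p q q :=
  calc lamB (bw P) (barcs P) S q
      = minW {T | IsTreeOn (barcs P) T S q}
          (fun T => uweight P (undir T) - ∑ t ∈ S, P.p t t + P.p q q) :=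
        minW_congr fun _ hT => hT.aweight_bw_eq
    _ = minW (undir '' {T | IsTreeOn (barcs P) T S q}) (uweight P)
          - ((∑ t ∈ S, P.p t t : ℝ) : EReal) + P.p q q := by
        rw [minW_add_const, minW_sub_const, minW_image]
    _ = nu P S - ((∑ t ∈ S, P.p t t : ℝ) : EReal) + P.p q q := by
        rw [image_undir_setOf_isTreeOn hq, nu]

end PotGraph

theorem statement12_general (P : PotGraph α) (S : Finset α) (q : α) (hq : q ∈ S) :
    lamB (bw P) (barcs P) S q =
        nu P S - ((∑ t ∈ S, P.p t t : ℝ) : EReal) + ((P.p q q : ℝ) : EReal) ∧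
      ∀ y ∈ S, (∀ t ∈ S, P.p y y ≤ P.p t t) →
        ∀ T : Finset (Sym2 α), IsUTreeOn P T S →
          (∀ U, IsUTreeOn P U S → uweight P T ≤ uweight P U) →
            ∀ Ty : Finset (α × α), Corresponds P Ty T S y →
              lamBul (bw P) (barcs P) S = lamB (bw P) (barcs P) S y ∧
                lamB (bw P) (barcs P) S y = ((aweight (bw P) Ty : ℝ) : EReal) := by
  refine ⟨lamB_eq_nu_sub_add hq, fun y hy hymin T hT hTmin Ty ⟨hTy, hund⟩ => ?_⟩
  have hlam : lamB (bw P) (barcs P) S y = ((aweight (bw P) Ty : ℝ) : EReal) := by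
    rw [lamB_eq_nu_sub_add hy, nu, minW_eq_of_forall_le (s := {U | IsUTreeOn P U S}) hT hTmin,
      hTy.aweight_bw_eq, hund]
    norm_cast
  refine ⟨le_antisymm (minW_anti _ fun T' hT' => ⟨y, hy, hT'⟩) (hlam ▸ le_minW ?_), hlam⟩
  rintro T' ⟨q', hq', hT'⟩
  rw [hTy.aweight_bw_eq, hT'.aweight_bw_eq, hund]
  exact_mod_cast by linarith [hTmin _ hT'.isUTreeOn_undir, hymin q' hq']

/-- Assertion 5.  If `q ∈ S` and `𝓣_S ≠ ∅`, then
`λ^{•q}_S = ν_S - ∑_{t ∈ S} p t t + p q q`.  Moreover, if `y ∈ S` has the minimal loop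
weight and `T ∈ 𝓣̃_S` is a minimum-weight undirected tree on `S`, then
`λ^•_S = λ^{•y}_S = Υ^{T_y}` where `T_y` is the entering tree corresponding to `T`
with root `y`. -/
theorem statement12 (P : PotGraph α) (S : Finset α) (q : α) (hq : q ∈ S)
    (hne : ∃ T, IsUTreeOn P T S) :
    lamB (bw P) (barcs P) S q =
        nu P S - ((∑ t ∈ S, P.p t t : ℝ) : EReal) + ((P.p q q : ℝ) : EReal) ∧
      ∀ y ∈ S, (∀ t ∈ S, P.p y y ≤ P.p t t) →
        ∀ T : Finset (Sym2 α), IsUTreeOn P T S →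
          (∀ U, IsUTreeOn P U S → uweight P T ≤ uweight P U) →
            ∀ Ty : Finset (α × α), Corresponds P Ty T S y →
              lamBul (bw P) (barcs P) S = lamB (bw P) (barcs P) S y ∧
                lamB (bw P) (barcs P) S y = ((aweight (bw P) Ty : ℝ) : EReal) :=
  statement12_general P S q hq

end BarrierForests
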